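/- Suppose u is a parallel refractor under the structural setup and the target Σ is regular from X* = (x*, u(x*)). Then there exist positive constants δ, C₁, C₂ depending on X* such that: if x̄, x̂ ∈ B_δ(x*), Ȳ ∈ F_u(x̄), Ŷ ∈ F_u(x̂), and |Ȳ − Ŷ| ≥ |x̄ − x̂|, then there exists x₀ on the segment [x̄, x̂] such that, with X₀* = (x₀, u(x₀)), u(x) − φ(x, Y, X₀*) ≥ −C|Ȳ − Ŷ||x̄ − x̂| − C|Y(λ) − Y||x − x₀| + C₁|Ȳ − Ŷ|²|x − x₀|² for all Y(λ) ∈ [Ȳ, Ŷ]_{X₀*} with λ ∈ [1/4, 3/4], all Y ∈ Σ, and all x ∈ Ω ∩ B_{C₂}(x₀), where the constant C depends only on the derivative bounds of φ. -/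

import Mathlib

noncomputable section

open scoped RealInnerProductSpace

/-- ℝⁿ with the Euclidean norm. -/
abbrev E (n : ℕ) : Type := EuclideanSpace ℝ (Fin n)

/-- Euclidean norm of a point of ℝ^{n+1} = ℝⁿ × ℝ. -/
def pnorm {n : ℕ} (W : E n × ℝ) : ℝ := Real.sqrt (‖W.1‖ ^ 2 + W.2 ^ 2)

/-- c(X,Y) = κ(y_{n+1} − x_{n+1}) − |X − Y|. -/
def cfun {n : ℕ} (κ : ℝ) (X Y : E n × ℝ) : ℝ := κ * (Y.2 - X.2) - pnorm (X - Y)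

/-- φ_{Y,b}(x): lower sheet of the two-sheeted hyperboloid with upper focus Y. -/
def hypb {n : ℕ} (κ : ℝ) (Y : E n × ℝ) (b : ℝ) (x : E n) : ℝ :=
  Y.2 - κ * b / (κ ^ 2 - 1) -
    Real.sqrt (b ^ 2 / (κ ^ 2 - 1) ^ 2 + ‖x - Y.1‖ ^ 2 / (κ ^ 2 - 1))

/-- φ(x, Y, X₀) = φ_{Y, c(X₀,Y)}(x). -/
def hyp {n : ℕ} (κ : ℝ) (x : E n) (Y X₀ : E n × ℝ) : ℝ := hypb κ Y (cfun κ X₀ Y) x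

/-- Q(v) = (κ − √(1 − (κ²−1)|v|²))/(1 + |v|²). -/
def Qf {n : ℕ} (κ : ℝ) (v : E n) : ℝ :=
  (κ - Real.sqrt (1 - (κ ^ 2 - 1) * ‖v‖ ^ 2)) / (1 + ‖v‖ ^ 2)

/-- Λ(v) = (Q(v)v, −Q(v) + κ), the refracted unit direction. -/
def Λf {n : ℕ} (κ : ℝ) (v : E n) : E n × ℝ := (Qf κ v • v, κ - Qf κ v)

/-- The point of the target in the direction Λ(v) from Z: Y(v) = Z + s_Z(Λ(v))Λ(v). -/
def YofZ {n : ℕ} (κ : ℝ) (sfun : (E n × ℝ) → (E n × ℝ) → ℝ) (Z : E n × ℝ)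
    (v : E n) : E n × ℝ :=
  Z + sfun Z (Λf κ v) • Λf κ v

/-- The point Y_Z(λ) on the "segment" [Ȳ, Ŷ]_Z obtained by interpolating the
gradients v̄ = D_xφ(z, Ȳ, Z), v̂ = D_xφ(z, Ŷ, Z). -/
def YZlam {n : ℕ} (κ : ℝ) (sfun : (E n × ℝ) → (E n × ℝ) → ℝ) (Z : E n × ℝ)
    (Yb Yh : E n × ℝ) (lam : ℝ) : E n × ℝ :=
  YofZ κ sfun Z ((1 - lam) • gradient (fun z => hyp κ z Yb Z) Z.1
    + lam • gradient (fun z => hyp κ z Yh Z) Z.1)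

/-- The refractor-normal map F_u(x̄) = {Y ∈ Σ : u ≥ φ(·, Y, (x̄, u(x̄))) on Ω}. -/
def Fu {n : ℕ} (κ : ℝ) (Ω : Set (E n)) (Tgt : Set (E n × ℝ)) (u : E n → ℝ)
    (xb : E n) : Set (E n × ℝ) :=
  {Y ∈ Tgt | ∀ x ∈ Ω, hyp κ x Y (xb, u xb) ≤ u x}

/-!
Take x₀ = x̄ and X₀ = (x̄, u(x̄)). All hyperboloids φ(·, Y, X₀) pass through X₀, and their
constants c(X₀, Y) are bounded below by (κ − 1)Δ; a mixed second-difference estimate for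
the hyperboloids then shows that two of them differ by at most C|Y − Y'||x − x̄|. This replaces
Y by Y(λ), for which regularity gives max{φ(·, Ȳ, X₀), φ(·, Ŷ, X₀)} − C₁|Ȳ − Ŷ|²|x − x̄|².
Here φ(·, Ȳ, X₀) ≤ u because Ȳ ∈ F_u(x̄), while φ(·, Ŷ, X₀) exceeds u by at most a multiple of
the gap u(x̄) − φ(x̄, Ŷ, (x̂, u(x̂))), and the same estimate between x̄ and x̂ bounds this gap by
C|Ȳ − Ŷ||x̄ − x̂|.
-/

lemma abs_sqrt_sq_add_sq_sub_le (a b c d : ℝ) :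
    |√(a ^ 2 + b ^ 2) - √(c ^ 2 + d ^ 2)| ≤ |a - c| + |b - d| := by
  rw [← Complex.norm_add_mul_I, ← Complex.norm_add_mul_I]
  refine (abs_norm_sub_norm_le _ _).trans ?_
  simpa using Complex.norm_le_abs_re_add_abs_im (a + b * Complex.I - (c + d * Complex.I))

lemma abs_sub_sub_sub_le_of_le_add {p p' q q' m : ℝ} (hm : 0 < m) (hp : m ≤ p + p') :
    |(p - p') - (q - q')|
      ≤ (|(p ^ 2 - p' ^ 2) - (q ^ 2 - q' ^ 2)| + |q - q'| * |(q + q') - (p + p')|) / m := by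
  have hpos : 0 < p + p' := hm.trans_le hp
  have key : (p - p') - (q - q')
      = ((p ^ 2 - p' ^ 2) - (q ^ 2 - q' ^ 2) + (q - q') * ((q + q') - (p + p'))) / (p + p') := by
    field_simp
    ring
  rw [key, abs_div, abs_of_pos hpos]
  refine div_le_div₀ (by positivity) ((abs_add_le _ _).trans ?_) hm hp
  rw [abs_mul]

section Pnorm

variable {n : ℕ}

lemma pnorm_eq_norm (W : E n × ℝ) : pnorm W = ‖WithLp.toLp 2 W‖ := by
  simp [pnorm, WithLp.prod_norm_eq_of_L2]

lemma pnorm_nonneg (W : E n × ℝ) : 0 ≤ pnorm W := Real.sqrt_nonneg _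

lemma norm_fst_le_pnorm (W : E n × ℝ) : ‖W.1‖ ≤ pnorm W := by
  simpa [pnorm_eq_norm] using WithLp.norm_fst_le _ (WithLp.toLp 2 W)

lemma abs_snd_le_pnorm (W : E n × ℝ) : |W.2| ≤ pnorm W := by
  simpa [pnorm_eq_norm] using WithLp.norm_snd_le _ (WithLp.toLp 2 W)

lemma pnorm_le_norm_add_abs (W : E n × ℝ) : pnorm W ≤ ‖W.1‖ + |W.2| := by
  simpa [pnorm, abs_of_nonneg (Real.sqrt_nonneg _)] using abs_sqrt_sq_add_sq_sub_le ‖W.1‖ W.2 0 0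

lemma pnorm_sub_le (V W : E n × ℝ) : pnorm (V - W) ≤ pnorm V + pnorm W := by
  simpa only [pnorm_eq_norm, WithLp.toLp_sub] using norm_sub_le _ _

lemma pnorm_sub_comm (V W : E n × ℝ) : pnorm (V - W) = pnorm (W - V) := by
  simp only [pnorm_eq_norm, WithLp.toLp_sub, norm_sub_rev]

lemma abs_pnorm_sub_pnorm_le (V W : E n × ℝ) : |pnorm V - pnorm W| ≤ pnorm (V - W) := by
  simpa only [pnorm_eq_norm, WithLp.toLp_sub] using abs_norm_sub_norm_le _ _

end Pnorm

section Hyperboloid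

variable {n : ℕ} {κ : ℝ}

def hypbRad (κ b : ℝ) (y x : E n) : ℝ :=
  √((b / (κ ^ 2 - 1)) ^ 2 + (‖x - y‖ / √(κ ^ 2 - 1)) ^ 2)

lemma hypb_eq (hκ : 1 < κ) (Y : E n × ℝ) (b : ℝ) (x : E n) :
    hypb κ Y b x = Y.2 - κ * b / (κ ^ 2 - 1) - hypbRad κ b Y.1 x := by
  have hA : 0 ≤ κ ^ 2 - 1 := by nlinarith
  rw [hypb, hypbRad, div_pow, div_pow, Real.sq_sqrt hA]

lemma hypbRad_sq (hκ : 1 < κ) (b : ℝ) (y x : E n) :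
    hypbRad κ b y x ^ 2 = (b / (κ ^ 2 - 1)) ^ 2 + ‖x - y‖ ^ 2 / (κ ^ 2 - 1) := by
  have hA : 0 ≤ κ ^ 2 - 1 := by nlinarith
  rw [hypbRad, Real.sq_sqrt (by positivity), div_pow ‖x - y‖, Real.sq_sqrt hA]

lemma div_le_hypbRad (b : ℝ) (y x : E n) : b / (κ ^ 2 - 1) ≤ hypbRad κ b y x :=
  (le_abs_self _).trans (Real.abs_le_sqrt (le_add_of_nonneg_right (sq_nonneg _)))

lemma abs_hypbRad_sub_hypbRad_le (hκ : 1 < κ) (b b' : ℝ) (y y' x x' : E n) :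
    |hypbRad κ b y x - hypbRad κ b' y' x'|
      ≤ |b - b'| / (κ ^ 2 - 1) + ‖(x - y) - (x' - y')‖ / √(κ ^ 2 - 1) := by
  have hA : 0 < κ ^ 2 - 1 := by nlinarith
  have hs : 0 < √(κ ^ 2 - 1) := Real.sqrt_pos.mpr hA
  refine (abs_sqrt_sq_add_sq_sub_le _ _ _ _).trans (add_le_add ?_ ?_)
  · rw [← sub_div, abs_div, abs_of_pos hA]
  · rw [← sub_div, abs_div, abs_of_pos hs]
    exact div_le_div_of_nonneg_right (abs_norm_sub_norm_le _ _) hs.le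

lemma abs_hypb_sub_hypb_le (hκ : 1 < κ) (Y : E n × ℝ) (b : ℝ) (x x' : E n) :
    |hypb κ Y b x - hypb κ Y b x'| ≤ ‖x - x'‖ / √(κ ^ 2 - 1) := by
  rw [hypb_eq hκ, hypb_eq hκ, show ∀ a r r' : ℝ, a - r - (a - r') = r' - r by intros; ring]
  simpa [norm_sub_rev x'] using abs_hypbRad_sub_hypbRad_le hκ b b Y.1 Y.1 x' x

lemma abs_sub_le_mul_abs_hypb_sub_hypb (hκ : 1 < κ) (Y : E n × ℝ) (b b' : ℝ) (x : E n) :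
    |b - b'| ≤ (κ + 1) * |hypb κ Y b x - hypb κ Y b' x| := by
  have hA : 0 < κ ^ 2 - 1 := by nlinarith
  have hrad := abs_hypbRad_sub_hypbRad_le hκ b b' Y.1 Y.1 x x
  rw [sub_self, norm_zero, zero_div, add_zero] at hrad
  have hdiff : hypb κ Y b x - hypb κ Y b' x
      = -(κ * (b - b') / (κ ^ 2 - 1) + (hypbRad κ b Y.1 x - hypbRad κ b' Y.1 x)) := by
    rw [hypb_eq hκ, hypb_eq hκ]; ring
  have hlin : |κ * (b - b') / (κ ^ 2 - 1)| = κ * |b - b'| / (κ ^ 2 - 1) := by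
    rw [abs_div, abs_mul, abs_of_pos (by linarith : 0 < κ), abs_of_pos hA]
  have hlow : κ * |b - b'| / (κ ^ 2 - 1) - |b - b'| / (κ ^ 2 - 1)
      ≤ |hypb κ Y b x - hypb κ Y b' x| := by
    have htri := abs_sub (κ * (b - b') / (κ ^ 2 - 1) + (hypbRad κ b Y.1 x - hypbRad κ b' Y.1 x))
      (hypbRad κ b Y.1 x - hypbRad κ b' Y.1 x)
    rw [add_sub_cancel_right, hlin] at htri
    rw [hdiff, abs_neg]
    linarith
  have hfac : κ * |b - b'| / (κ ^ 2 - 1) - |b - b'| / (κ ^ 2 - 1) = |b - b'| / (κ + 1) := by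
    field_simp
    ring
  rw [hfac, div_le_iff₀' (by linarith)] at hlow
  exact hlow

lemma abs_hypb_sub_hypb_sub_sub_le (hκ : 1 < κ) {b₀ b b' : ℝ} (hb₀ : 0 < b₀) (hb : b₀ ≤ b)
    (hb' : b₀ ≤ b') (Y Y' : E n × ℝ) (x x₀ : E n) :
    |(hypb κ Y b x - hypb κ Y' b' x) - (hypb κ Y b x₀ - hypb κ Y' b' x₀)|
      ≤ (|b - b'| / √(κ ^ 2 - 1) + 2 * ‖Y.1 - Y'.1‖) / b₀ * ‖x - x₀‖ := by
  have hA : 0 < κ ^ 2 - 1 := by nlinarith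
  set R := hypbRad κ b Y.1
  set R' := hypbRad κ b' Y'.1
  have hred : (hypb κ Y b x - hypb κ Y' b' x) - (hypb κ Y b x₀ - hypb κ Y' b' x₀)
      = -((R x - R' x) - (R x₀ - R' x₀)) := by
    simp only [hypb_eq hκ, R, R']; ring
  rw [hred, abs_neg]
  have hm : 0 < 2 * b₀ / (κ ^ 2 - 1) := by positivity
  have hsum : 2 * b₀ / (κ ^ 2 - 1) ≤ R x + R' x := by
    have := div_le_hypbRad (κ := κ) b Y.1 x
    have := div_le_hypbRad (κ := κ) b' Y'.1 x
    have := div_le_div_of_nonneg_right hb hA.le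
    have := div_le_div_of_nonneg_right hb' hA.le
    rw [mul_div_assoc, two_mul]
    linarith
  have hsq : |(R x ^ 2 - R' x ^ 2) - (R x₀ ^ 2 - R' x₀ ^ 2)|
      ≤ 2 * ‖Y.1 - Y'.1‖ * ‖x - x₀‖ / (κ ^ 2 - 1) := by
    have hid : (R x ^ 2 - R' x ^ 2) - (R x₀ ^ 2 - R' x₀ ^ 2)
        = 2 * ⟪x - x₀, Y'.1 - Y.1⟫ / (κ ^ 2 - 1) := by
      simp only [R, R', hypbRad_sq hκ, norm_sub_sq_real, inner_sub_left, inner_sub_right]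
      ring
    rw [hid, abs_div, abs_of_pos hA, abs_mul, abs_two, mul_assoc, norm_sub_rev Y.1,
      mul_comm ‖Y'.1 - Y.1‖]
    gcongr
    exact abs_real_inner_le_norm _ _
  have hgap : |R x₀ - R' x₀| ≤ |b - b'| / (κ ^ 2 - 1) + ‖Y.1 - Y'.1‖ / √(κ ^ 2 - 1) := by
    simpa [norm_sub_rev Y'.1] using abs_hypbRad_sub_hypbRad_le hκ b b' Y.1 Y'.1 x₀ x₀
  have hmove : |(R x₀ + R' x₀) - (R x + R' x)| ≤ 2 * ‖x - x₀‖ / √(κ ^ 2 - 1) := by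
    have h := abs_hypbRad_sub_hypbRad_le hκ b b Y.1 Y.1 x₀ x
    have h' := abs_hypbRad_sub_hypbRad_le hκ b' b' Y'.1 Y'.1 x₀ x
    simp only [sub_self, abs_zero, zero_div, zero_add, sub_sub_sub_cancel_right,
      norm_sub_rev x₀] at h h'
    calc |(R x₀ + R' x₀) - (R x + R' x)| = |(R x₀ - R x) + (R' x₀ - R' x)| := by ring_nf
      _ ≤ |R x₀ - R x| + |R' x₀ - R' x| := abs_add_le _ _
      _ ≤ 2 * ‖x - x₀‖ / √(κ ^ 2 - 1) := by rw [mul_div_assoc, two_mul]; exact add_le_add h h'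
  calc |(R x - R' x) - (R x₀ - R' x₀)|
      ≤ (2 * ‖Y.1 - Y'.1‖ * ‖x - x₀‖ / (κ ^ 2 - 1)
          + (|b - b'| / (κ ^ 2 - 1) + ‖Y.1 - Y'.1‖ / √(κ ^ 2 - 1))
            * (2 * ‖x - x₀‖ / √(κ ^ 2 - 1))) / (2 * b₀ / (κ ^ 2 - 1)) :=
        (abs_sub_sub_sub_le_of_le_add hm hsum).trans <| div_le_div_of_nonneg_right
          (add_le_add hsq (mul_le_mul hgap hmove (abs_nonneg _) (by positivity))) hm.le
    _ = (|b - b'| / √(κ ^ 2 - 1) + 2 * ‖Y.1 - Y'.1‖) / b₀ * ‖x - x₀‖ := by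
        field_simp
        linear_combination (-(‖x - x₀‖ * ‖Y.1 - Y'.1‖)) * Real.sq_sqrt hA.le

lemma hyp_self (hκ : 1 < κ) (x₀ : E n) (z : ℝ) (Y : E n × ℝ) : hyp κ x₀ Y (x₀, z) = z := by
  have hA : 0 < κ ^ 2 - 1 := by nlinarith
  set t := Y.2 - z
  set R := pnorm ((x₀, z) - Y)
  have hR : R ^ 2 = ‖x₀ - Y.1‖ ^ 2 + t ^ 2 := by
    simp only [R, pnorm, Prod.fst_sub, Prod.snd_sub]
    rw [Real.sq_sqrt (by positivity)]
    ring
  have htR : t ≤ R := by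
    have := abs_snd_le_pnorm ((x₀, z) - Y)
    rw [Prod.snd_sub, abs_sub_comm] at this
    exact (le_abs_self t).trans this
  have hroot : √((κ * t - R) ^ 2 / (κ ^ 2 - 1) ^ 2 + ‖x₀ - Y.1‖ ^ 2 / (κ ^ 2 - 1))
      = (κ * R - t) / (κ ^ 2 - 1) := by
    have hR0 : 0 ≤ R := Real.sqrt_nonneg _
    rw [← Real.sqrt_sq (div_nonneg (by nlinarith) hA.le : 0 ≤ (κ * R - t) / (κ ^ 2 - 1))]
    congr 1
    field_simp
    linear_combination (1 - κ ^ 2) * hR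
  simp only [hyp, hypb, cfun]
  rw [hroot]
  field_simp
  ring

lemma abs_cfun_sub_cfun_le (hκ : 0 ≤ κ) (X X' Y Y' : E n × ℝ) :
    |cfun κ X Y - cfun κ X' Y'| ≤ (κ + 1) * (pnorm (X - X') + pnorm (Y - Y')) := by
  have hX := abs_snd_le_pnorm (X - X')
  have hY := abs_snd_le_pnorm (Y - Y')
  have hp := (abs_pnorm_sub_pnorm_le (X - Y) (X' - Y')).trans
    (pnorm_sub_le (X - X') (Y - Y') |>.trans_eq' (by abel_nf))
  rw [Prod.snd_sub] at hX hY
  have hlin : |κ * ((Y.2 - Y'.2) - (X.2 - X'.2))| ≤ κ * (pnorm (X - X') + pnorm (Y - Y')) := by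
    rw [abs_mul, abs_of_nonneg hκ]
    exact mul_le_mul_of_nonneg_left ((abs_sub _ _).trans (by linarith)) hκ
  calc |cfun κ X Y - cfun κ X' Y'|
      = |κ * ((Y.2 - Y'.2) - (X.2 - X'.2)) - (pnorm (X - Y) - pnorm (X' - Y'))| := by
        simp only [cfun]; ring_nf
    _ ≤ (κ + 1) * (pnorm (X - X') + pnorm (Y - Y')) := by
        linarith [abs_sub (κ * ((Y.2 - Y'.2) - (X.2 - X'.2))) (pnorm (X - Y) - pnorm (X' - Y'))]

lemma sub_one_mul_le_cfun (hκ : 1 < κ) {Δ : ℝ} {X Y : E n × ℝ} (hXY : ‖X.1 - Y.1‖ ≤ Δ)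
    (hgap : κ * Δ / (κ - 1) ≤ Y.2 - X.2) : (κ - 1) * Δ ≤ cfun κ X Y := by
  have hκ1 : 0 < κ - 1 := by linarith
  have hΔ : 0 ≤ Δ := (norm_nonneg _).trans hXY
  have hgap' : κ * Δ ≤ (κ - 1) * (Y.2 - X.2) := by
    rwa [div_le_iff₀' hκ1] at hgap
  have hp := pnorm_le_norm_add_abs (X - Y)
  rw [Prod.fst_sub, Prod.snd_sub, abs_sub_comm,
    abs_of_nonneg ((div_nonneg (by positivity) hκ1.le).trans hgap)] at hp
  rw [cfun]
  linarith

lemma hyp_le_hyp_add (hκ : 1 < κ) {b₀ : ℝ} (hb₀ : 0 < b₀) {x₀ : E n} {z : ℝ} {Y Y' : E n × ℝ}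
    (hY : b₀ ≤ cfun κ (x₀, z) Y) (hY' : b₀ ≤ cfun κ (x₀, z) Y') (x : E n) :
    hyp κ x Y (x₀, z)
      ≤ hyp κ x Y' (x₀, z) + ((κ + 1) / √(κ ^ 2 - 1) + 2) / b₀ * pnorm (Y' - Y) * ‖x - x₀‖ := by
  have h : |(hyp κ x Y (x₀, z) - hyp κ x Y' (x₀, z)) - (hyp κ x₀ Y (x₀, z) - hyp κ x₀ Y' (x₀, z))|
      ≤ (|cfun κ (x₀, z) Y - cfun κ (x₀, z) Y'| / √(κ ^ 2 - 1) + 2 * ‖Y.1 - Y'.1‖) / b₀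
        * ‖x - x₀‖ :=
    abs_hypb_sub_hypb_sub_sub_le hκ hb₀ hY hY' Y Y' x x₀
  rw [hyp_self hκ, hyp_self hκ, sub_self, sub_zero] at h
  have hc : |cfun κ (x₀, z) Y - cfun κ (x₀, z) Y'| ≤ (κ + 1) * pnorm (Y - Y') := by
    simpa [pnorm_eq_norm] using abs_cfun_sub_cfun_le (κ := κ) (by linarith) (x₀, z) (x₀, z) Y Y'
  have hfst := norm_fst_le_pnorm (Y - Y')
  rw [Prod.fst_sub] at hfst
  suffices hyp κ x Y (x₀, z) - hyp κ x Y' (x₀, z)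
      ≤ ((κ + 1) / √(κ ^ 2 - 1) + 2) / b₀ * pnorm (Y' - Y) * ‖x - x₀‖ by linarith
  calc hyp κ x Y (x₀, z) - hyp κ x Y' (x₀, z) ≤ _ := (le_abs_self _).trans h
    _ ≤ ((κ + 1) * pnorm (Y - Y') / √(κ ^ 2 - 1) + 2 * pnorm (Y - Y')) / b₀ * ‖x - x₀‖ := by
        gcongr
    _ = _ := by rw [pnorm_sub_comm Y']; ring

end Hyperboloid

lemma exists_ball_subset_forall_graph_mem {α β : Type*} [PseudoMetricSpace α]
    [TopologicalSpace β] {s : Set α} {f : α → β} {a : α} {U : Set (α × β)} (hs : IsOpen s)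
    (ha : a ∈ s) (hf : ContinuousOn f s) (hU : U ∈ nhds (a, f a)) :
    ∃ δ > 0, Metric.ball a δ ⊆ s ∧ ∀ x ∈ Metric.ball a δ, (x, f x) ∈ U := by
  have hgraph : ContinuousAt (fun x => (x, f x)) a :=
    continuousAt_id.prodMk (hf.continuousAt (hs.mem_nhds ha))
  obtain ⟨δ, hδ, hball⟩ := Metric.mem_nhds_iff.mp (Filter.inter_mem (hs.mem_nhds ha) (hgraph hU))
  exact ⟨δ, hδ, fun x hx => (hball hx).1, fun x hx => (hball hx).2⟩

section Refractor

variable {n : ℕ} {κ : ℝ} {Ω : Set (E n)} {Tgt : Set (E n × ℝ)} {u : E n → ℝ}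

lemma abs_sub_le_of_hypb_support (hκ : 1 < κ)
    (hu : ∀ x₀ ∈ Ω, ∃ Y b, (∀ x ∈ Ω, hypb κ Y b x ≤ u x) ∧ u x₀ = hypb κ Y b x₀)
    {x x' : E n} (hx : x ∈ Ω) (hx' : x' ∈ Ω) : |u x - u x'| ≤ ‖x - x'‖ / √(κ ^ 2 - 1) := by
  have hone : ∀ x ∈ Ω, ∀ x' ∈ Ω, u x - u x' ≤ ‖x - x'‖ / √(κ ^ 2 - 1) := by
    intro x hx x' hx'
    obtain ⟨Y, b, hsupp, heq⟩ := hu x hx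
    have := hsupp x' hx'
    have := (le_abs_self _).trans (abs_hypb_sub_hypb_le hκ Y b x x')
    linarith
  rw [abs_sub_le_iff, norm_sub_rev]
  exact ⟨norm_sub_rev x x' ▸ hone x hx x' hx', hone x' hx' x hx⟩

lemma hyp_le_add_mul_of_mem_Fu (hκ : 1 < κ) {b₀ : ℝ} (hb₀ : 0 < b₀) {xb xh x : E n}
    {Yh : E n × ℝ} (hxb : xb ∈ Ω) (hx : x ∈ Ω) (hYh : Yh ∈ Fu κ Ω Tgt u xh)
    (hbb : b₀ ≤ cfun κ (xb, u xb) Yh) (hbh : b₀ ≤ cfun κ (xh, u xh) Yh) :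
    hyp κ x Yh (xb, u xb)
      ≤ u x + (1 + (κ + 1) * ‖x - xb‖ / (√(κ ^ 2 - 1) * b₀))
        * (u xb - hyp κ xb Yh (xh, u xh)) := by
  set e := u xb - hyp κ xb Yh (xh, u xh)
  have he : 0 ≤ e := sub_nonneg.mpr (hYh.2 xb hxb)
  have hval : hyp κ xb Yh (xb, u xb) - hyp κ xb Yh (xh, u xh) = e := by
    rw [hyp_self hκ]
  have hc : |cfun κ (xb, u xb) Yh - cfun κ (xh, u xh) Yh| ≤ (κ + 1) * e := by
    have := abs_sub_le_mul_abs_hypb_sub_hypb hκ Yh (cfun κ (xb, u xb) Yh) (cfun κ (xh, u xh) Yh) xb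
    rwa [← hyp, ← hyp, hval, abs_of_nonneg he] at this
  have h : |(hyp κ x Yh (xb, u xb) - hyp κ x Yh (xh, u xh)) - e|
      ≤ (|cfun κ (xb, u xb) Yh - cfun κ (xh, u xh) Yh| / √(κ ^ 2 - 1) + 2 * ‖Yh.1 - Yh.1‖) / b₀
        * ‖x - xb‖ :=
    hval ▸ abs_hypb_sub_hypb_sub_sub_le hκ hb₀ hbb hbh Yh Yh x xb
  rw [sub_self, norm_zero, mul_zero, add_zero] at h
  have hmove : (|cfun κ (xb, u xb) Yh - cfun κ (xh, u xh) Yh| / √(κ ^ 2 - 1)) / b₀ * ‖x - xb‖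
      ≤ (κ + 1) * ‖x - xb‖ / (√(κ ^ 2 - 1) * b₀) * e := by
    calc _ ≤ ((κ + 1) * e / √(κ ^ 2 - 1)) / b₀ * ‖x - xb‖ := by gcongr
      _ = _ := by field_simp
  have := hYh.2 x hx
  linarith [le_abs_self ((hyp κ x Yh (xb, u xb) - hyp κ x Yh (xh, u xh)) - e)]

lemma sub_hyp_le_of_mem_Fu (hκ : 1 < κ) {b₀ : ℝ} (hb₀ : 0 < b₀) {xb xh : E n} {Yb Yh : E n × ℝ}
    (hxh : xh ∈ Ω) (hYb : Yb ∈ Fu κ Ω Tgt u xb)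
    (hbb : b₀ ≤ cfun κ (xb, u xb) Yb) (hbh : b₀ ≤ cfun κ (xh, u xh) Yh)
    (hu : |u xb - u xh| ≤ ‖xb - xh‖ / √(κ ^ 2 - 1)) (hle : ‖xb - xh‖ ≤ pnorm (Yb - Yh)) :
    u xb - hyp κ xb Yh (xh, u xh)
      ≤ ((κ + 1) * (2 + 1 / √(κ ^ 2 - 1)) / √(κ ^ 2 - 1) + 2) / b₀
        * pnorm (Yb - Yh) * ‖xb - xh‖ := by
  have hs : 0 < √(κ ^ 2 - 1) := Real.sqrt_pos.mpr (by nlinarith)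
  set P := pnorm (Yb - Yh)
  have h : |(hyp κ xb Yb (xb, u xb) - hyp κ xb Yh (xh, u xh))
        - (hyp κ xh Yb (xb, u xb) - hyp κ xh Yh (xh, u xh))|
      ≤ (|cfun κ (xb, u xb) Yb - cfun κ (xh, u xh) Yh| / √(κ ^ 2 - 1) + 2 * ‖Yb.1 - Yh.1‖) / b₀
        * ‖xb - xh‖ :=
    abs_hypb_sub_hypb_sub_sub_le hκ hb₀ hbb hbh Yb Yh xb xh
  rw [hyp_self hκ, hyp_self hκ] at h
  have hX : pnorm ((xb, u xb) - (xh, u xh)) ≤ P + P / √(κ ^ 2 - 1) := by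
    have := pnorm_le_norm_add_abs ((xb, u xb) - (xh, u xh))
    have := div_le_div_of_nonneg_right hle hs.le
    rw [Prod.fst_sub, Prod.snd_sub] at *
    linarith
  have hc : |cfun κ (xb, u xb) Yb - cfun κ (xh, u xh) Yh|
      ≤ (κ + 1) * ((2 + 1 / √(κ ^ 2 - 1)) * P) :=
    (abs_cfun_sub_cfun_le (by linarith) _ _ _ _).trans
      (mul_le_mul_of_nonneg_left (by linarith [show (2 + 1 / √(κ ^ 2 - 1)) * P
        = P + P / √(κ ^ 2 - 1) + P by ring]) (by linarith))
  have hfst := norm_fst_le_pnorm (Yb - Yh)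
  rw [Prod.fst_sub] at hfst
  have hYb := hYb.2 xh hxh
  calc u xb - hyp κ xb Yh (xh, u xh)
      ≤ |(u xb - hyp κ xb Yh (xh, u xh)) - (hyp κ xh Yb (xb, u xb) - u xh)| := by
        linarith [le_abs_self ((u xb - hyp κ xb Yh (xh, u xh)) - (hyp κ xh Yb (xb, u xb) - u xh))]
    _ ≤ ((κ + 1) * ((2 + 1 / √(κ ^ 2 - 1)) * P) / √(κ ^ 2 - 1) + 2 * P) / b₀ * ‖xb - xh‖ :=
        h.trans (by gcongr)
    _ = _ := by ring

theorem exists_le_sub_hyp_of_regular (hκ : 1 < κ) {b₀ : ℝ} (hb₀ : 0 < b₀)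
    (hcfun : ∀ x ∈ Ω, ∀ Y ∈ Tgt, b₀ ≤ cfun κ (x, u x) Y)
    (hu : ∀ x ∈ Ω, ∀ x' ∈ Ω, |u x - u x'| ≤ ‖x - x'‖ / √(κ ^ 2 - 1)) (c₁ : ℝ) {c₂ : ℝ}
    (hc₂ : 0 ≤ c₂) :
    ∃ C > 0, ∀ xb ∈ Ω, ∀ xh ∈ Ω, ∀ Yb ∈ Fu κ Ω Tgt u xb, ∀ Yh ∈ Fu κ Ω Tgt u xh,
      ‖xb - xh‖ ≤ pnorm (Yb - Yh) → ∀ Yl ∈ Tgt, ∀ Y ∈ Tgt, ∀ x ∈ Ω, ‖x - xb‖ ≤ c₂ →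
      hyp κ x Yl (xb, u xb) ≤ max (hyp κ x Yb (xb, u xb)) (hyp κ x Yh (xb, u xb))
        - c₁ * pnorm (Yb - Yh) ^ 2 * ‖x - xb‖ ^ 2 →
      -C * pnorm (Yb - Yh) * ‖xb - xh‖ - C * pnorm (Yl - Y) * ‖x - xb‖
        + c₁ * pnorm (Yb - Yh) ^ 2 * ‖x - xb‖ ^ 2 ≤ u x - hyp κ x Y (xb, u xb) := by
  set Ka := ((κ + 1) / √(κ ^ 2 - 1) + 2) / b₀
  set Ke := ((κ + 1) * (2 + 1 / √(κ ^ 2 - 1)) / √(κ ^ 2 - 1) + 2) / b₀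
  set M := 1 + (κ + 1) * c₂ / (√(κ ^ 2 - 1) * b₀)
  have hKa : 0 < Ka := by positivity
  have hKe : 0 < Ke := by positivity
  have hM : 0 < M := by positivity
  refine ⟨Ka + M * Ke, by positivity, ?_⟩
  intro xb hxb xh hxh Yb hYb Yh hYh hle Yl hYl Y hY x hx hxc₂ hreg
  have hswap := hyp_le_hyp_add hκ hb₀ (hcfun xb hxb Y hY) (hcfun xb hxb Yl hYl) x
  have hYh_le := hyp_le_add_mul_of_mem_Fu hκ hb₀ hxb hx hYh
    (hcfun xb hxb Yh hYh.1) (hcfun xh hxh Yh hYh.1)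
  have hgap := sub_hyp_le_of_mem_Fu hκ hb₀ hxh hYb (hcfun xb hxb Yb hYb.1) (hcfun xh hxh Yh hYh.1)
    (hu xb hxb xh hxh) hle
  have hgap0 : 0 ≤ u xb - hyp κ xb Yh (xh, u xh) := sub_nonneg.mpr (hYh.2 xb hxb)
  have hPB : 0 ≤ pnorm (Yb - Yh) * ‖xb - xh‖ := mul_nonneg (pnorm_nonneg _) (norm_nonneg _)
  have hmax : max (hyp κ x Yb (xb, u xb)) (hyp κ x Yh (xb, u xb))
      ≤ u x + M * (Ke * pnorm (Yb - Yh) * ‖xb - xh‖) := by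
    refine max_le ?_ (hYh_le.trans ?_)
    · exact (hYb.2 x hx).trans (le_add_of_nonneg_right (mul_nonneg hM.le (hgap0.trans hgap)))
    · gcongr
      simp only [M]
      gcongr
  have hKaPB : 0 ≤ Ka * (pnorm (Yb - Yh) * ‖xb - xh‖) := mul_nonneg hKa.le hPB
  have hMKeDr : 0 ≤ M * Ke * (pnorm (Yl - Y) * ‖x - xb‖) :=
    mul_nonneg (mul_nonneg hM.le hKe.le) (mul_nonneg (pnorm_nonneg _) (norm_nonneg _))
  linarith

end Refractor

theorem stmt_15_general {n : ℕ} (κ : ℝ) (hκ : 1 < κ)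
    (Ω : Set (E n)) (hΩo : IsOpen Ω)
    (hΩb : Bornology.IsBounded Ω)
    (Tgt : Set (E n × ℝ))
    (τ₀ τ₁ ω Δ : ℝ) (hΔpos : 0 < Δ)
    (hslab : ∀ Y ∈ Tgt, Y.2 ∈ Set.Icc τ₁ (τ₁ + ω))
    (hΔ : ∀ Y ∈ Tgt, Metric.diam (Ω ∪ {Y.1}) ≤ Δ)
    (hcompat : max (κ * τ₀) (τ₀ + κ * Δ / (κ - 1)) ≤ τ₁)
    (u : E n → ℝ) (hurange : ∀ x ∈ Ω, u x ∈ Set.Icc 0 τ₀)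
    (hu : ∀ x₀ ∈ Ω, ∃ Y ∈ Tgt, ∃ b : ℝ, 0 < b ∧
      b < κ * Y.2 - Real.sqrt (Y.2 ^ 2 + Δ ^ 2) ∧
      (∀ x ∈ Ω, hypb κ Y b x ≤ u x) ∧ u x₀ = hypb κ Y b x₀)
    (sfun : (E n × ℝ) → (E n × ℝ) → ℝ)
    (xstar : E n) (hxstar : xstar ∈ Ω)
    (hreg : ∃ U ∈ nhds ((xstar, u xstar) : E n × ℝ), ∃ c₁ : ℝ, 0 < c₁ ∧ ∃ c₂ : ℝ, 0 < c₂ ∧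
      ∀ Yb ∈ Tgt, ∀ Yh ∈ Tgt, ∀ Z ∈ U, ∀ lam ∈ Set.Icc (1/4 : ℝ) (3/4),
        ∀ x ∈ Ω, ‖x - Z.1‖ ≤ c₂ →
          hyp κ x (YZlam κ sfun Z Yb Yh lam) Z
            ≤ max (hyp κ x Yb Z) (hyp κ x Yh Z)
              - c₁ * (pnorm (Yb - Yh)) ^ 2 * ‖x - Z.1‖ ^ 2)
    : ∃ δ : ℝ, 0 < δ ∧ ∃ C₁ : ℝ, 0 < C₁ ∧ ∃ C₂ : ℝ, 0 < C₂ ∧ ∃ C : ℝ, 0 < C ∧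
      Metric.ball xstar δ ⊆ Ω ∧
      ∀ xb ∈ Metric.ball xstar δ, ∀ xh ∈ Metric.ball xstar δ,
        ∀ Yb ∈ Fu κ Ω Tgt u xb, ∀ Yh ∈ Fu κ Ω Tgt u xh,
          ‖xb - xh‖ ≤ pnorm (Yb - Yh) →
          ∃ x₀ ∈ segment ℝ xb xh,
            ∀ lam ∈ Set.Icc (1/4 : ℝ) (3/4),
              YZlam κ sfun (x₀, u x₀) Yb Yh lam ∈ Tgt →
              ∀ Y ∈ Tgt, ∀ x ∈ Ω ∩ Metric.ball x₀ C₂,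
                -C * pnorm (Yb - Yh) * ‖xb - xh‖
                  - C * pnorm (YZlam κ sfun (x₀, u x₀) Yb Yh lam - Y) * ‖x - x₀‖
                  + C₁ * pnorm (Yb - Yh) ^ 2 * ‖x - x₀‖ ^ 2
                ≤ u x - hyp κ x Y (x₀, u x₀) := by
  obtain ⟨U, hU, c₁, hc₁, c₂, hc₂, hregU⟩ := hreg
  have hulip : ∀ x ∈ Ω, ∀ x' ∈ Ω, |u x - u x'| ≤ ‖x - x'‖ / √(κ ^ 2 - 1) :=
    fun x hx x' hx' => abs_sub_le_of_hypb_support hκ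
      (fun x₀ hx₀ => let ⟨Y, _, b, _, _, hb⟩ := hu x₀ hx₀; ⟨Y, b, hb⟩) hx hx'
  have hcfun : ∀ x ∈ Ω, ∀ Y ∈ Tgt, (κ - 1) * Δ ≤ cfun κ (x, u x) Y := fun x hx Y hY =>
    sub_one_mul_le_cfun hκ
      (by simpa [dist_eq_norm] using (Metric.dist_le_diam_of_mem
        (hΩb.union Bornology.isBounded_singleton) (Or.inl hx) (Or.inr rfl)).trans (hΔ Y hY))
      (by linarith [(hslab Y hY).1, (hurange x hx).2,
        le_max_right (κ * τ₀) (τ₀ + κ * Δ / (κ - 1))])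
  obtain ⟨C, hC, hbound⟩ :=
    exists_le_sub_hyp_of_regular hκ (mul_pos (by linarith) hΔpos) hcfun hulip c₁ hc₂.le
  obtain ⟨δ, hδ, hδΩ, hδU⟩ := exists_ball_subset_forall_graph_mem hΩo hxstar
    (LipschitzOnWith.of_dist_le' (K := 1 / √(κ ^ 2 - 1)) fun x hx x' hx' => by
      simpa [Real.dist_eq, dist_eq_norm, div_eq_inv_mul] using hulip x hx x' hx').continuousOn hU
  refine ⟨δ, hδ, c₁, hc₁, c₂, hc₂, C, hC, hδΩ, fun xb hxb xh hxh Yb hYb Yh hYh hle => ?_⟩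
  refine ⟨xb, left_mem_segment ℝ xb xh, fun lam hlam hYl Y hY x hx => ?_⟩
  have hxc₂ : ‖x - xb‖ ≤ c₂ := (mem_ball_iff_norm.mp hx.2).le
  exact hbound xb (hδΩ hxb) xh (hδΩ hxh) Yb hYb Yh hYh hle _ hYl Y hY x hx.1 hxc₂
    (hregU Yb hYb.1 Yh hYh.1 _ (hδU xb hxb) lam hlam x hx.1 hxc₂)

/-- the key Taylor-type lower bound for u − φ near a point from which
the target is regular. -/
theorem stmt_15 {n : ℕ} (hn : 1 ≤ n) (κ : ℝ) (hκ : 1 < κ)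
    (Ω : Set (E n)) (hΩo : IsOpen Ω) (hΩconv : Convex ℝ Ω)
    (hΩb : Bornology.IsBounded Ω) (hΩne : Ω.Nonempty)
    (Tgt : Set (E n × ℝ)) (hTc : IsCompact Tgt) (hTne : Tgt.Nonempty)
    (τ₀ τ₁ ω Δ : ℝ) (hτ₀ : 0 < τ₀) (hτ : τ₀ < τ₁) (hω : 0 < ω) (hΔpos : 0 < Δ)
    (hslab : ∀ Y ∈ Tgt, Y.2 ∈ Set.Icc τ₁ (τ₁ + ω))
    (hΔ : ∀ Y ∈ Tgt, Metric.diam (Ω ∪ {Y.1}) ≤ Δ)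
    (hcompat : max (κ * τ₀) (τ₀ + κ * Δ / (κ - 1)) ≤ τ₁)
    (u : E n → ℝ) (hurange : ∀ x ∈ Ω, u x ∈ Set.Icc 0 τ₀)
    (hu : ∀ x₀ ∈ Ω, ∃ Y ∈ Tgt, ∃ b : ℝ, 0 < b ∧
      b < κ * Y.2 - Real.sqrt (Y.2 ^ 2 + Δ ^ 2) ∧
      (∀ x ∈ Ω, hypb κ Y b x ≤ u x) ∧ u x₀ = hypb κ Y b x₀)
    (sfun : (E n × ℝ) → (E n × ℝ) → ℝ)
    (hspos : ∀ X d, 0 < sfun X d)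
    (hslip : ∀ X : E n × ℝ, ∃ K : NNReal, LipschitzWith K (sfun X))
    (hparam : ∀ X : E n × ℝ, X.1 ∈ Ω → X.2 ∈ Set.Icc 0 τ₀ → ∀ Y ∈ Tgt,
      ∃ d : E n × ℝ, pnorm d = 1 ∧ Y = X + sfun X d • d)
    (xstar : E n) (hxstar : xstar ∈ Ω)
    (hreg : ∃ U ∈ nhds ((xstar, u xstar) : E n × ℝ), ∃ c₁ : ℝ, 0 < c₁ ∧ ∃ c₂ : ℝ, 0 < c₂ ∧
      ∀ Yb ∈ Tgt, ∀ Yh ∈ Tgt, ∀ Z ∈ U, ∀ lam ∈ Set.Icc (1/4 : ℝ) (3/4),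
        ∀ x ∈ Ω, ‖x - Z.1‖ ≤ c₂ →
          hyp κ x (YZlam κ sfun Z Yb Yh lam) Z
            ≤ max (hyp κ x Yb Z) (hyp κ x Yh Z)
              - c₁ * (pnorm (Yb - Yh)) ^ 2 * ‖x - Z.1‖ ^ 2)
    : ∃ δ : ℝ, 0 < δ ∧ ∃ C₁ : ℝ, 0 < C₁ ∧ ∃ C₂ : ℝ, 0 < C₂ ∧ ∃ C : ℝ, 0 < C ∧
      Metric.ball xstar δ ⊆ Ω ∧
      ∀ xb ∈ Metric.ball xstar δ, ∀ xh ∈ Metric.ball xstar δ,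
        ∀ Yb ∈ Fu κ Ω Tgt u xb, ∀ Yh ∈ Fu κ Ω Tgt u xh,
          ‖xb - xh‖ ≤ pnorm (Yb - Yh) →
          ∃ x₀ ∈ segment ℝ xb xh,
            ∀ lam ∈ Set.Icc (1/4 : ℝ) (3/4),
              YZlam κ sfun (x₀, u x₀) Yb Yh lam ∈ Tgt →
              ∀ Y ∈ Tgt, ∀ x ∈ Ω ∩ Metric.ball x₀ C₂,
                -C * pnorm (Yb - Yh) * ‖xb - xh‖
                  - C * pnorm (YZlam κ sfun (x₀, u x₀) Yb Yh lam - Y) * ‖x - x₀‖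
                  + C₁ * pnorm (Yb - Yh) ^ 2 * ‖x - x₀‖ ^ 2
                ≤ u x - hyp κ x Y (x₀, u x₀) :=
  stmt_15_general κ hκ Ω hΩo hΩb Tgt τ₀ τ₁ ω Δ hΔpos hslab hΔ hcompat u hurange hu sfun xstar hxstar
    hreg
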